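/- arXiv:1705.06244 — 2 statements merged into one kernel-verified Lean document; each statement's English description precedes it below -/
import Mathlib

section
/- For every proper embedding 𝒯 ∈ Λ_N, the boxes B(𝒯(m), 2L), for distinct leaves m ∈ T_(N), are pairwise disjoint. -/
/-!
Two distinct leaves branch at a last common ancestor `p` of depth `k`; write `e = N - k - 1`.
The two children of `p` are at distance at least `6^(e+1) L`, because the steps of lengths `A`
and `2A` from `p` cannot nearly cancel. Since the step lengths grow geometrically towards the
root, a leaf lies within `2L (6 + ⋯ + 6^e) = (12/5)(6^e - 1) L` of its ancestor at depth `k + 1`.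
Hence the two leaves are at distance at least `(6/5) 6^e L + (24/5) L > 4L`, and their boxes of
radius `2L` cannot meet.
-/

/-- The `ℓ∞` norm of a point of `ℤ^d`, as a natural number. -/
def normInf {d : ℕ} (x : Fin d → ℤ) : ℕ := Finset.univ.sup fun i => (x i).natAbs

/-- The `ℓ∞`-ball `B(x, r)` in `ℤ^d`. -/
def box {d : ℕ} (x : Fin d → ℤ) (r : ℕ) : Set (Fin d → ℤ) := {y | normInf (y - x) ≤ r}

/-- Proper embedding of the binary tree `T_N` of height `N` (scale parameter `L`). -/
def IsProperEmbedding (d L N : ℕ) (T : List Bool → (Fin d → ℤ)) : Prop :=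
  T [] = 0 ∧
  (∀ m : List Bool, m.length ≤ N → ∀ i : Fin d,
      ((6 ^ (N - m.length) * L : ℕ) : ℤ) ∣ T m i) ∧
  ∀ m : List Bool, m.length < N →
    normInf (T (m ++ [false]) - T m) = 6 ^ (N - m.length) * L ∧
    normInf (T (m ++ [true]) - T m) = 2 * (6 ^ (N - m.length) * L)

section normInf

variable {d : ℕ}

lemma normInf_add_le (x y : Fin d → ℤ) : normInf (x + y) ≤ normInf x + normInf y :=
  Finset.sup_le fun i _ => (Int.natAbs_add_le _ _).trans <|
    add_le_add (Finset.le_sup (f := fun j => (x j).natAbs) (Finset.mem_univ i))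
      (Finset.le_sup (f := fun j => (y j).natAbs) (Finset.mem_univ i))

lemma normInf_sub_le_add (x y z : Fin d → ℤ) :
    normInf (x - z) ≤ normInf (x - y) + normInf (y - z) := by
  simpa using normInf_add_le (x - y) (y - z)

lemma normInf_sub_comm (x y : Fin d → ℤ) : normInf (x - y) = normInf (y - x) := by
  unfold normInf
  congr 1
  ext i
  simp only [Pi.sub_apply, ← Int.natAbs_neg (x i - y i), neg_sub]

lemma disjoint_box_of_lt {x y : Fin d → ℤ} {r s : ℕ} (h : r + s < normInf (x - y)) :
    Disjoint (box x r) (box y s) := by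
  refine Set.disjoint_left.2 fun z (hx : normInf (z - x) ≤ r) (hy : normInf (z - y) ≤ s) => ?_
  have := normInf_sub_le_add x z y
  rw [normInf_sub_comm x z] at this
  omega

end normInf

lemma List.exists_append_cons_of_ne {α : Type*} :
    ∀ {l l' : List α}, l.length = l'.length → l ≠ l' →
      ∃ p a a' s s', a ≠ a' ∧ l = p ++ a :: s ∧ l' = p ++ a' :: s' ∧ s.length = s'.length
  | [], [], _, hne => absurd rfl hne
  | a :: l, a' :: l', hlen, hne => by
    by_cases ha : a = a'
    · subst ha
      obtain ⟨p, b, b', s, s', hb, rfl, rfl, hs⟩ :=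
        exists_append_cons_of_ne (by simpa using hlen) fun h => hne (congrArg _ h)
      exact ⟨a :: p, b, b', s, s', hb, rfl, rfl, hs⟩
    · exact ⟨[], a, a', l, l', ha, rfl, rfl, by simpa using hlen⟩

namespace IsProperEmbedding

variable {d L N : ℕ} {T : List Bool → (Fin d → ℤ)}

lemma normInf_child_sub_le (hT : IsProperEmbedding d L N T) {m : List Bool}
    (hm : m.length < N) (b : Bool) :
    normInf (T (m ++ [b]) - T m) ≤ 2 * (6 ^ (N - m.length) * L) := by
  obtain ⟨hfalse, htrue⟩ := hT.2.2 m hm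
  cases b
  · rw [hfalse]; omega
  · rw [htrue]

lemma le_normInf_siblings_sub (hT : IsProperEmbedding d L N T) {p : List Bool}
    (hp : p.length < N) {a a' : Bool} (ha : a ≠ a') :
    6 ^ (N - p.length) * L ≤ normInf (T (p ++ [a]) - T (p ++ [a'])) := by
  obtain ⟨hfalse, htrue⟩ := hT.2.2 p hp
  have htri := normInf_sub_le_add (T (p ++ [true])) (T (p ++ [false])) (T p)
  cases a <;> cases a' <;> simp only [ne_eq, not_true_eq_false] at ha
  · rw [normInf_sub_comm]; omega
  · omega

/-- The geometric sum `2L (6^(j+1) + ⋯ + 6^(j+|s|)) = (12/5)(6^(j+|s|) - 6^j) L`, cleared of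
subtraction and division; the slack term `12·6^j·L` is what makes the induction go through. -/
lemma normInf_descendant_sub_le (hT : IsProperEmbedding d L N T) (j : ℕ) :
    ∀ (s m : List Bool), m.length + s.length + j = N →
      5 * normInf (T (m ++ s) - T m) + 12 * 6 ^ j * L ≤ 12 * 6 ^ (j + s.length) * L
  | [], m, _ => by simp [normInf]
  | b :: s, m, hN => by
    rw [List.length_cons] at hN
    have hlen : (m ++ [b]).length + s.length + j = N := by
      rw [List.length_append, List.length_singleton]; omega
    have ih := normInf_descendant_sub_le hT j s (m ++ [b]) hlen
    have hstep := hT.normInf_child_sub_le (m := m) (by omega) b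
    have hexp : N - m.length = j + s.length + 1 := by omega
    have htri := normInf_sub_le_add (T (m ++ b :: s)) (T (m ++ [b])) (T m)
    rw [hexp, pow_succ] at hstep
    rw [List.length_cons, ← add_assoc, pow_succ]
    simp only [List.append_assoc, List.cons_append, List.nil_append] at ih
    linarith

lemma normInf_leaf_sub_le (hT : IsProperEmbedding d L N T) {m s : List Bool}
    (hN : m.length + s.length = N) :
    5 * normInf (T (m ++ s) - T m) + 12 * L ≤ 12 * 6 ^ s.length * L := by
  simpa using hT.normInf_descendant_sub_le 0 s m (by omega)

end IsProperEmbedding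

theorem leaf_boxes_pairwise_disjoint_general (d L N : ℕ) (hL : 1 ≤ L)
    (T : List Bool → (Fin d → ℤ)) (hT : IsProperEmbedding d L N T) :
    ∀ m m' : List Bool, m.length = N → m'.length = N → m ≠ m' →
      Disjoint (box (T m) (2 * L)) (box (T m') (2 * L)) := by
  intro m m' hm hm' hne
  obtain ⟨p, a, a', s, s', ha, rfl, rfl, hs⟩ :=
    List.exists_append_cons_of_ne (hm.trans hm'.symm) hne
  have hN : p.length + 1 + s.length = N := by
    simp only [List.length_append, List.length_cons] at hm; omega
  have hsplit (x : Bool) (t : List Bool) : p ++ x :: t = p ++ [x] ++ t := by simp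
  have hsib := hT.le_normInf_siblings_sub (p := p) (by omega) ha
  have hleaf := hT.normInf_leaf_sub_le (m := p ++ [a]) (s := s) (by simp only [List.length_append, List.length_singleton]; omega)
  have hleaf' := hT.normInf_leaf_sub_le (m := p ++ [a']) (s := s') (by simp only [List.length_append, List.length_singleton]; omega)
  rw [← hsplit] at hleaf hleaf'
  rw [← hs] at hleaf'
  rw [show N - p.length = s.length + 1 by omega, pow_succ] at hsib
  have htri₁ := normInf_sub_le_add (T (p ++ [a])) (T (p ++ a :: s)) (T (p ++ [a']))
  have htri₂ := normInf_sub_le_add (T (p ++ a :: s)) (T (p ++ a' :: s')) (T (p ++ [a']))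
  rw [normInf_sub_comm (T (p ++ [a])) (T (p ++ a :: s))] at htri₁
  apply disjoint_box_of_lt
  linarith

theorem leaf_boxes_pairwise_disjoint (d L N : ℕ) (hd : 1 ≤ d) (hL : 1 ≤ L)
    (T : List Bool → (Fin d → ℤ)) (hT : IsProperEmbedding d L N T) :
    ∀ m m' : List Bool, m.length = N → m'.length = N → m ≠ m' →
      Disjoint (box (T m) (2 * L)) (box (T m') (2 * L)) :=
  leaf_boxes_pairwise_disjoint_general d L N hL T hT
end

section
/- Let d ≥ 2, M ≥ 1, ξ ∈ {0,1}^{ℤ^d}, and let x, y ∈ ℤ^d with |x − y|_1 = 1. Suppose that for each z ∈ {x, y} the restriction of ξ to B(Mz, M) has a unique open cluster of ℓ∞-diameter at least M, and this cluster intersects every face of B(Mz, M); call it the special cluster of B(Mz, M). Then the special cluster of B(Mx, M) and the special cluster of B(My, M) have a common vertex. -/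
/-- The `ℓ¹` norm of a point of `ℤ^d`, as a natural number. -/
def norm1 {d : ℕ} (x : Fin d → ℤ) : ℕ := ∑ i, (x i).natAbs

/-- `x` and `y` are connected by a nearest-neighbor path of open sites staying in `S`. -/
def openConnIn (d : ℕ) (S : Set (Fin d → ℤ)) (ξ : (Fin d → ℤ) → Bool)
    (x y : Fin d → ℤ) : Prop :=
  ∃ (n : ℕ) (γ : ℕ → (Fin d → ℤ)), γ 0 = x ∧ γ n = y ∧
    (∀ i ≤ n, γ i ∈ S ∧ ξ (γ i) = true) ∧
    ∀ i < n, norm1 (γ (i + 1) - γ i) = 1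

/-- `C` is an open cluster of `ξ` restricted to `S`. -/
def IsOpenClusterIn (d : ℕ) (S : Set (Fin d → ℤ)) (ξ : (Fin d → ℤ) → Bool)
    (C : Set (Fin d → ℤ)) : Prop :=
  ∃ x ∈ S, ξ x = true ∧ C = {y | openConnIn d S ξ x y}

/-- The set `C` has `ℓ∞`-diameter at least `M`. -/
def DiamGE {d : ℕ} (M : ℕ) (C : Set (Fin d → ℤ)) : Prop :=
  ∃ u ∈ C, ∃ v ∈ C, M ≤ normInf (u - v)

/-- `C` intersects every face of the box `B(z, M)`. -/
def HitsAllFaces {d : ℕ} (z : Fin d → ℤ) (M : ℕ) (C : Set (Fin d → ℤ)) : Prop :=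
  ∀ j : Fin d, ∀ ε : ℤ, (ε = 1 ∨ ε = -1) → ∃ w ∈ C, w j - z j = ε * M

/-- `C` is a special cluster of `B(z, M)`: an open cluster of `ξ|_{B(z,M)}` of
diameter `≥ M` intersecting every face of `B(z, M)`. -/
def IsSpecialCluster (d : ℕ) (z : Fin d → ℤ) (M : ℕ) (ξ : (Fin d → ℤ) → Bool)
    (C : Set (Fin d → ℤ)) : Prop :=
  IsOpenClusterIn d (box z M) ξ C ∧ DiamGE M C ∧ HitsAllFaces z M C

lemma coord_le_normInf {d : ℕ} (u : Fin d → ℤ) (i : Fin d) :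
    (u i).natAbs ≤ normInf u := by
  unfold normInf; exact Finset.le_sup (f := fun i => (u i).natAbs) (Finset.mem_univ i)

lemma coord_le_norm1 {d : ℕ} (u : Fin d → ℤ) (i : Fin d) :
    (u i).natAbs ≤ norm1 u := by
  unfold norm1; exact Finset.single_le_sum (f := fun i => (u i).natAbs) (fun _ _ => Nat.zero_le _) (Finset.mem_univ i)

lemma normInf_le_iff {d : ℕ} (u : Fin d → ℤ) (r : ℕ) :
    normInf u ≤ r ↔ ∀ i, (u i).natAbs ≤ r := by
  unfold normInf; exact Finset.sup_le_iff.trans (by simp)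

lemma norm1_sub_comm {d : ℕ} (u v : Fin d → ℤ) : norm1 (u - v) = norm1 (v - u) := by
  unfold norm1
  exact Finset.sum_congr rfl fun i _ => by
    simp only [Pi.sub_apply]; omega

lemma norm1_eq_one {d : ℕ} {u : Fin d → ℤ} (h : norm1 u = 1) :
    ∃ j, (u j).natAbs = 1 ∧ ∀ i, i ≠ j → u i = 0 := by
  unfold norm1 at h
  obtain ⟨j, hj⟩ : ∃ j, (u j).natAbs ≠ 0 := by
    by_contra hc
    push_neg at hc
    rw [Finset.sum_eq_zero (fun i _ => hc i)] at h
    omega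
  have hrest : ∑ i ∈ Finset.univ.erase j, (u i).natAbs + (u j).natAbs = 1 := by
    rw [Finset.sum_erase_add _ _ (Finset.mem_univ j)]; exact h
  have hz : ∑ i ∈ Finset.univ.erase j, (u i).natAbs = 0 := by omega
  refine ⟨j, by omega, fun i hi => ?_⟩
  have := (Finset.sum_eq_zero_iff.mp hz) i (by simp [hi])
  omega

lemma openConnIn_refl {d : ℕ} {S : Set (Fin d → ℤ)} {ξ : (Fin d → ℤ) → Bool}
    {x : Fin d → ℤ} (hS : x ∈ S) (hx : ξ x = true) : openConnIn d S ξ x x :=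
  ⟨0, fun _ => x, rfl, rfl, fun _ _ => ⟨hS, hx⟩, fun i hi => absurd hi (Nat.not_lt_zero i)⟩

lemma openConnIn_symm {d : ℕ} {S : Set (Fin d → ℤ)} {ξ : (Fin d → ℤ) → Bool}
    {x y : Fin d → ℤ} (h : openConnIn d S ξ x y) : openConnIn d S ξ y x := by
  obtain ⟨n, γ, h0, hn, hmem, hstep⟩ := h
  refine ⟨n, fun i => γ (n - i), by simp [hn], by simp [h0],
    fun i _ => hmem _ (Nat.sub_le _ _), fun i hi => ?_⟩
  have h1 : n - (i + 1) + 1 = n - i := by omega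
  have h2 := hstep (n - (i + 1)) (by omega)
  rw [h1] at h2
  rw [norm1_sub_comm]
  exact h2

lemma openConnIn_trans {d : ℕ} {S : Set (Fin d → ℤ)} {ξ : (Fin d → ℤ) → Bool}
    {x y z : Fin d → ℤ} (h1 : openConnIn d S ξ x y) (h2 : openConnIn d S ξ y z) :
    openConnIn d S ξ x z := by
  obtain ⟨n, γ, g0, gn, gmem, gstep⟩ := h1
  obtain ⟨m, δ, d0, dm, dmem, dstep⟩ := h2
  refine ⟨n + m, fun i => if i ≤ n then γ i else δ (i - n), by simp [g0], ?_, ?_, ?_⟩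
  · by_cases h : m = 0
    · subst h; simp [gn, ← dm, ← d0]
    · have hn' : ¬ (n + m ≤ n) := by omega
      simp only [hn', if_false]
      simpa using dm
  · intro i hi
    by_cases h : i ≤ n
    · simpa [h] using gmem i h
    · simp only [if_neg h]; exact dmem _ (by omega)
  · intro i hi
    by_cases h : i + 1 ≤ n
    · simp only [if_pos h, if_pos (by omega : i ≤ n)]; exact gstep i (by omega)
    · by_cases h' : i ≤ n
      · have hin : i = n := by omega
        subst hin
        simp only [if_neg h, if_pos le_rfl]
        have e1 : i + 1 - i = 1 := by omega
        rw [e1, gn, ← d0]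
        exact dstep 0 (by omega)
      · simp only [if_neg h, if_neg h']
        have e1 : i + 1 - n = (i - n) + 1 := by omega
        rw [e1]
        exact dstep (i - n) (by omega)

theorem special_clusters_of_neighbors_intersect (d M : ℕ) (hd : 2 ≤ d) (hM : 1 ≤ M)
    (ξ : (Fin d → ℤ) → Bool) (x y : Fin d → ℤ) (hxy : norm1 (x - y) = 1)
    (hx : ∃ C, IsSpecialCluster d (fun j => (M : ℤ) * x j) M ξ C ∧
      ∀ C', IsOpenClusterIn d (box (fun j => (M : ℤ) * x j) M) ξ C' →
        DiamGE M C' → C' = C)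
    (hy : ∃ C, IsSpecialCluster d (fun j => (M : ℤ) * y j) M ξ C ∧
      ∀ C', IsOpenClusterIn d (box (fun j => (M : ℤ) * y j) M) ξ C' →
        DiamGE M C' → C' = C) :
    ∀ Cx Cy : Set (Fin d → ℤ),
      IsSpecialCluster d (fun j => (M : ℤ) * x j) M ξ Cx →
      IsSpecialCluster d (fun j => (M : ℤ) * y j) M ξ Cy →
      (Cx ∩ Cy).Nonempty := by
  intro Cx Cy hCx hCy
  set cx : Fin d → ℤ := fun j => (M : ℤ) * x j with hcx
  set cy : Fin d → ℤ := fun j => (M : ℤ) * y j with hcy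
  -- find the direction j and sign ε with y = x + ε e_j
  obtain ⟨j, hj1, hjo⟩ := norm1_eq_one hxy
  simp only [Pi.sub_apply] at hj1 hjo
  have hjo' : ∀ i, i ≠ j → x i = y i := fun i hi => by have := hjo i hi; omega
  set ε : ℤ := y j - x j with hε
  have hε1 : ε = 1 ∨ ε = -1 := by omega
  -- get two points of Cy on opposite faces (direction j) of B(cy, M)
  obtain ⟨b, hbC, hbface⟩ := hCy.2.2 j (-ε) (by omega)
  obtain ⟨a, haC, haface⟩ := hCy.2.2 j ε hε1
  have hbj : b j = cx j := by
    have : b j - cy j = -ε * M := hbface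
    simp only [hcy, hcx]
    rcases hε1 with h | h <;> [skip; skip] <;>
      (simp only [hcy] at this; push_cast at this ⊢; nlinarith [this])
  -- a path from b to a inside B(cy, M)
  obtain ⟨y0, hy0S, hy0ξ, hCyeq⟩ := hCy.1
  rw [hCyeq] at hbC haC
  have hba : openConnIn d (box cy M) ξ b a :=
    openConnIn_trans (openConnIn_symm hbC) haC
  obtain ⟨n, γ, h0, hn, hmem, hstep⟩ := hba
  -- coordinate function along the path
  set f : ℕ → ℤ := fun i => ε * (γ i j - cx j) with hf
  have hcxy : cy j = cx j + ε * M := by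
    simp only [hcx, hcy, hε]; ring
  have hf0 : f 0 = 0 := by simp [hf, h0, hbj]
  have hfn : f n = 2 * M := by
    have : a j - cy j = ε * M := haface
    simp only [hf, hn]
    rcases hε1 with h | h <;> (rw [h] at this ⊢; rw [hcxy] at this; rw [h] at this; ring_nf; ring_nf at this; omega)
  have hbox : ∀ i ≤ n, ∀ l, (γ i l - cy l).natAbs ≤ M := by
    intro i hi l
    have := (hmem i hi).1
    have h2 : normInf (γ i - cy) ≤ M := this
    have := (normInf_le_iff _ _).mp h2 l
    simpa using this
  have hflow : ∀ i ≤ n, 0 ≤ f i ∧ f i ≤ 2 * M := by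
    intro i hi
    have h1 := hbox i hi j
    have h2 : (γ i j - cy j).natAbs ≤ M := h1
    rw [hcxy] at h2
    simp only [hf]
    rcases hε1 with h | h <;> (rw [h] at h2 ⊢; omega)
  have hstep1 : ∀ i < n, (f (i + 1) - f i).natAbs ≤ 1 := by
    intro i hi
    have h1 := hstep i hi
    have h2 := coord_le_norm1 (γ (i+1) - γ i) j
    rw [h1] at h2
    simp only [Pi.sub_apply] at h2
    simp only [hf]
    rcases hε1 with h | h <;> (rw [h]; omega)
  -- first index where f reaches M
  have hPex : ∃ i, (M : ℤ) ≤ f i := ⟨n, by omega⟩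
  set k := Nat.find hPex with hk
  have hkP : (M : ℤ) ≤ f k := Nat.find_spec hPex
  have hkn : k ≤ n := Nat.find_le (by omega)
  have hk0 : k ≠ 0 := by
    intro h
    rw [h] at hkP; omega
  have hfk : f k = M := by
    have hlt := Nat.find_min hPex (show k - 1 < k by omega)
    have := hstep1 (k - 1) (by omega)
    have e : k - 1 + 1 = k := by omega
    rw [e] at this
    omega
  have hfle : ∀ i ≤ k, f i ≤ M := by
    intro i hi
    rcases eq_or_lt_of_le hi with h | h
    · rw [h]; omega
    · have := Nat.find_min hPex h; omega
  -- the sub-path up to k stays in B(cx, M)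
  have hsub : ∀ i ≤ k, γ i ∈ box cx M := by
    intro i hi
    have hin : i ≤ n := le_trans hi hkn
    refine (normInf_le_iff _ _).mpr fun l => ?_
    by_cases hl : l = j
    · subst hl
      have h1 := hflow i hin
      have h2 := hfle i hi
      simp only [hf] at h1 h2
      simp only [Pi.sub_apply]
      rcases hε1 with h | h <;> (rw [h] at h1 h2; omega)
    · have h1 := hbox i hin l
      have : cy l = cx l := by
        simp only [hcx, hcy, hjo' l hl]
      simp only [Pi.sub_apply, ← this]
      simpa using h1
  have hbbox : b ∈ box cx M := h0 ▸ hsub 0 (Nat.zero_le _)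
  have hbξ : ξ b = true := h0 ▸ (hmem 0 (Nat.zero_le _)).2
  -- the cluster of b inside B(cx, M)
  set C' : Set (Fin d → ℤ) := {p | openConnIn d (box cx M) ξ b p} with hC'
  have hbC' : b ∈ C' := openConnIn_refl hbbox hbξ
  have hγkC' : γ k ∈ C' :=
    ⟨k, γ, h0, rfl, fun i hi => ⟨hsub i hi, (hmem i (le_trans hi hkn)).2⟩,
      fun i hi => hstep i (lt_of_lt_of_le hi hkn)⟩
  have hdiam : DiamGE M C' := by
    refine ⟨b, hbC', γ k, hγkC', ?_⟩
    have h1 : ((b - γ k) j).natAbs = M := by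
      simp only [Pi.sub_apply, hbj]
      have := hfk
      simp only [hf] at this
      rcases hε1 with h | h <;> (rw [h] at this; omega)
    calc M = ((b - γ k) j).natAbs := h1.symm
    _ ≤ normInf (b - γ k) := coord_le_normInf _ j
  have hclus : IsOpenClusterIn d (box cx M) ξ C' := ⟨b, hbbox, hbξ, rfl⟩
  -- uniqueness on the x-side
  obtain ⟨C0, hC0spec, huniq⟩ := hx
  have h1 : Cx = C0 := huniq Cx hCx.1 hCx.2.1
  have h2 : C' = C0 := huniq C' hclus hdiam
  have hbCx : b ∈ Cx := by rw [h1, ← h2]; exact hbC'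
  have hbCy : b ∈ Cy := by rw [hCyeq]; exact hbC
  exact ⟨b, hbCx, hbCy⟩
end
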